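/- For any nonnegative symmetric Ŝ with optimal 2-cut set C*, the matrix F with F_1 = 1_{C*} and F_l = α_l·1_{V∖C*} for l=2,...,k, where α_l > 0 and ∑_{l=2}^k α_l = 1, is feasible for the simplex-constrained problem and its objective value ∑_{l=1}^k TV(F_l)/S(F_l) equals k · cut(C*, V∖C*)/Ŝ(C*); moreover, rounding F by row-wise argmax yields at most 2 nonempty sets, hence not a k-partition when k > 2. -/

import Mathlib

/-!
Every column of `F` is a positive multiple of `1_{C*}` or of `1_{V∖C*}`. Both `TV` and the
Lovász extension are positively 1-homogeneous and restrict to `cut(A, Aᶜ)` and `Ŝ(A)` on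
indicator vectors, so each of the `k` column ratios equals `cut(C*, V∖C*) / Ŝ(C*)`, using the
symmetry of `W` and `Ŝ` for the columns supported on `V∖C*`. Moreover `F` has only two distinct
rows, so any rounding that depends on the row alone takes at most two values.
-/

open Finset

noncomputable def lovasz {n : ℕ} (Sh : Finset (Fin n) → ℝ) (f : Fin n → ℝ) : ℝ :=
  ∑ i : Fin n,
    f (Tuple.sort f i) *
      (Sh (if (i : ℕ) = 0 then Finset.univ
            else Finset.univ.filter
              (fun j => f (Tuple.sort f ⟨(i : ℕ) - 1, lt_of_le_of_lt (Nat.sub_le _ _) i.isLt⟩) < f j))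
        - Sh (Finset.univ.filter (fun j => f (Tuple.sort f i) < f j)))

/-- cut(A,B) = ∑_{i∈A, j∈B} w_{ij}. -/
noncomputable def cutF {n : ℕ} (W : Matrix (Fin n) (Fin n) ℝ) (A B : Finset (Fin n)) : ℝ :=
  ∑ i ∈ A, ∑ j ∈ B, W i j

/-- Total variation TV(f) = (1/2) ∑_{i,j} w_{ij} |f_i - f_j|. -/
noncomputable def tv {n : ℕ} (W : Matrix (Fin n) (Fin n) ℝ) (f : Fin n → ℝ) : ℝ :=
  (1 / 2) * ∑ i : Fin n, ∑ j : Fin n, W i j * |f i - f j|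

/-- Indicator vector of a set. -/
noncomputable def indic {n : ℕ} (A : Finset (Fin n)) : Fin n → ℝ :=
  fun i => if i ∈ A then 1 else 0

theorem Tuple.sort_comp_of_strictMono {n : ℕ} {α β : Type*} [LinearOrder α] [LinearOrder β]
    {φ : α → β} (hφ : StrictMono φ) (f : Fin n → α) : Tuple.sort (φ ∘ f) = Tuple.sort f :=
  (Tuple.eq_sort_iff.mpr ⟨hφ.monotone.comp (Tuple.monotone_sort f),
    fun i j hij h => (Tuple.eq_sort_iff.mp rfl).2 i j hij (hφ.injective h)⟩).symm

theorem lovasz_const_mul {n : ℕ} (Sh : Finset (Fin n) → ℝ) (f : Fin n → ℝ) {c : ℝ} (hc : 0 < c) :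
    lovasz Sh (fun i => c * f i) = c * lovasz Sh f := by
  have hsort : Tuple.sort (fun i => c * f i) = Tuple.sort f :=
    Tuple.sort_comp_of_strictMono (strictMono_mul_left_of_pos hc) f
  simp only [lovasz, hsort, mul_lt_mul_iff_right₀ hc, mul_sum, mul_assoc]

theorem tv_const_mul {n : ℕ} (W : Matrix (Fin n) (Fin n) ℝ) (f : Fin n → ℝ) (c : ℝ) :
    tv W (fun i => c * f i) = |c| * tv W f := by
  simp only [tv, ← mul_sub, abs_mul, mul_sum, mul_left_comm (|c|)]

theorem indic_nonneg {n : ℕ} (A : Finset (Fin n)) (i : Fin n) : 0 ≤ indic A i := by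
  unfold indic; split_ifs <;> norm_num

theorem indic_add_indic_compl {n : ℕ} (A : Finset (Fin n)) (i : Fin n) :
    indic A i + indic Aᶜ i = 1 := by
  by_cases hi : i ∈ A <;> simp [indic, hi]

theorem abs_indic_sub_indic {n : ℕ} (A : Finset (Fin n)) (i j : Fin n) :
    |indic A i - indic A j| = indic A i * indic Aᶜ j + indic Aᶜ i * indic A j := by
  by_cases hi : i ∈ A <;> by_cases hj : j ∈ A <;> simp [indic, hi, hj]

theorem cutF_eq_sum_indic {n : ℕ} (W : Matrix (Fin n) (Fin n) ℝ) (A B : Finset (Fin n)) :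
    cutF W A B = ∑ i, ∑ j, W i j * (indic A i * indic B j) := by
  simp [cutF, indic, mul_ite, Finset.sum_ite_mem]

theorem cutF_comm {n : ℕ} (W : Matrix (Fin n) (Fin n) ℝ) (hW : ∀ i j, W i j = W j i)
    (A B : Finset (Fin n)) : cutF W A B = cutF W B A :=
  sum_comm.trans (sum_congr rfl fun j _ => sum_congr rfl fun i _ => hW i j)

theorem tv_indic {n : ℕ} (W : Matrix (Fin n) (Fin n) ℝ) (hW : ∀ i j, W i j = W j i)
    (A : Finset (Fin n)) : tv W (indic A) = cutF W A Aᶜ := by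
  simp only [tv, abs_indic_sub_indic, mul_add, sum_add_distrib, ← cutF_eq_sum_indic,
    cutF_comm W hW Aᶜ A]
  ring

theorem filter_indic_lt {n : ℕ} (A : Finset (Fin n)) (x : Fin n) :
    univ.filter (fun j => indic A x < indic A j) = if x ∈ A then ∅ else A := by
  ext j
  by_cases hx : x ∈ A <;> by_cases hj : j ∈ A <;> simp [indic, hx, hj]

/- After sorting, the zeros of `indic A` come first. Only the first index `i₀` landing in `A`
contributes, namely `Sh A - Sh ∅`; every later index contributes `Sh ∅ - Sh ∅`. -/
theorem lovasz_indic {n : ℕ} (Sh : Finset (Fin n) → ℝ) (h0 : Sh ∅ = 0) (A : Finset (Fin n)) :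
    lovasz Sh (indic A) = Sh A := by
  simp only [lovasz, filter_indic_lt]
  set σ := Tuple.sort (indic A)
  have hup : ∀ i j, i ≤ j → σ i ∈ A → σ j ∈ A := fun i j hij hi => by
    have := Tuple.monotone_sort (indic A) hij
    by_contra hj
    norm_num [indic, σ, hi, hj] at this
  by_cases hA : ∃ i, σ i ∈ A
  swap
  · push Not at hA
    have hAempty : A = ∅ :=
      eq_empty_of_forall_notMem fun a ha => hA (σ.symm a) (by simpa using ha)
    simp [hAempty, indic, h0]
  obtain ⟨i₀, hi₀, hmin⟩ := (univ.filter fun i => σ i ∈ A).exists_min_image id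
    (by obtain ⟨i, hi⟩ := hA; exact ⟨i, by simpa using hi⟩)
  simp only [mem_filter, mem_univ, true_and, id] at hi₀ hmin
  refine (sum_eq_single i₀ (fun i _ hi => ?_) (by simp)).trans ?_
  · by_cases hiA : σ i ∈ A
    · have hlt : i₀ < i := lt_of_le_of_ne (hmin i hiA) (Ne.symm hi)
      have hprev : σ ⟨i - 1, by omega⟩ ∈ A := hup i₀ _ (Fin.le_def.mpr (by simp; omega)) hi₀
      simp [indic, hiA, hprev, show (i : ℕ) ≠ 0 by omega]
    · simp [indic, hiA]
  · by_cases hz : (i₀ : ℕ) = 0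
    · have hAuniv : A = univ := eq_univ_of_forall fun a => by
        simpa using hup i₀ (σ.symm a) (Fin.le_def.mpr (by omega)) hi₀
      simp [indic, hz, h0, hAuniv]
    · have hprev : σ ⟨i₀ - 1, by omega⟩ ∉ A := fun h => by
        have := Fin.le_def.mp (hmin _ h)
        simp at this
        omega
      simp [indic, hi₀, hprev, hz, h0]

theorem Function.FactorsThrough.exists_pair_of_forall_eq_or_eq {ι β γ : Type*} [Nonempty β]
    {g : ι → β} {r : ι → γ} (hg : g.FactorsThrough r) {a b : γ}
    (hr : ∀ i, r i = a ∨ r i = b) : ∃ x y, ∀ i, g i = x ∨ g i = y := by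
  let e : γ → β := fun _ => Classical.arbitrary β
  refine ⟨Function.extend r g e a, Function.extend r g e b, fun i => ?_⟩
  rcases hr i with h | h <;> simp [← h, hg.extend_apply]

theorem degenerate_solution_symmetric_general {n k : ℕ} [NeZero k]
    (W : Matrix (Fin n) (Fin n) ℝ)
    (hWsym : ∀ i j, W i j = W j i)
    (Sh : Finset (Fin n) → ℝ) (h0 : Sh ∅ = 0)
    (hsym : ∀ A : Finset (Fin n), Sh A = Sh Aᶜ)
    (Cs : Finset (Fin n))
    (α : Fin k → ℝ) (hα : ∀ l, l ≠ 0 → 0 < α l)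
    (hαsum : ∑ l ∈ Finset.univ.filter (fun l => l ≠ (0 : Fin k)), α l = 1)
    (F : Fin n → Fin k → ℝ)
    (hF0 : ∀ i, F i 0 = indic Cs i)
    (hFl : ∀ i l, l ≠ 0 → F i l = α l * indic Csᶜ i) :
    (∀ i l, 0 ≤ F i l) ∧ (∀ i, ∑ l, F i l = 1) ∧
    (∑ l, tv W (fun i => F i l) / lovasz Sh (fun i => F i l)) =
      k * (cutF W Cs Csᶜ / Sh Cs) ∧
    (∀ g : Fin n → Fin k,
      (∀ i l, F i l ≤ F i (g i)) →
      (∀ i i', (∀ l, F i l = F i' l) → g i = g i') →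
      ∃ l₁ l₂ : Fin k, ∀ i, g i = l₁ ∨ g i = l₂) := by
  have hcol : ∀ l, l ≠ 0 → (fun i => F i l) = fun i => α l * indic Csᶜ i :=
    fun l hl => funext fun i => hFl i l hl
  have hratio : ∀ l, tv W (fun i => F i l) / lovasz Sh (fun i => F i l) =
      cutF W Cs Csᶜ / Sh Cs := by
    intro l
    rcases eq_or_ne l 0 with rfl | hl
    · simp only [hF0, tv_indic W hWsym, lovasz_indic Sh h0]
    · rw [hcol l hl, tv_const_mul, lovasz_const_mul _ _ (hα l hl), abs_of_pos (hα l hl),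
        mul_div_mul_left _ _ (hα l hl).ne', tv_indic W hWsym, lovasz_indic Sh h0, compl_compl,
        cutF_comm W hWsym, ← hsym]
  refine ⟨fun i l => ?_, fun i => ?_, ?_, fun g _ hcons => ?_⟩
  · rcases eq_or_ne l 0 with rfl | hl
    · exact hF0 i ▸ indic_nonneg Cs i
    · exact hFl i l hl ▸ mul_nonneg (hα l hl).le (indic_nonneg Csᶜ i)
  · have hrest : ∑ l ∈ univ.filter (· ≠ 0), F i l = indic Csᶜ i := by
      rw [sum_congr rfl fun l hl => hFl i l (mem_filter.mp hl).2, ← sum_mul, hαsum, one_mul]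
    rw [← add_sum_erase _ _ (mem_univ 0), ← filter_ne', hrest, hF0, indic_add_indic_compl]
  · simp [hratio]
  · have hrow : ∀ i, F i = fun l => if l = 0 then indic Cs i else α l * indic Csᶜ i :=
      fun i => funext fun l => by split_ifs with hl; exacts [hl ▸ hF0 i, hFl i l hl]
    refine Function.FactorsThrough.exists_pair_of_forall_eq_or_eq (r := F)
      (a := fun l => if l = 0 then 1 else 0) (b := fun l => if l = 0 then 0 else α l)
      (fun i i' h => hcons i i' (congrFun h)) fun i => ?_
    by_cases hi : i ∈ Cs <;> simp [hrow, indic, hi]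

/-- For a symmetric balancing function and an optimal 2-cut set C*, the matrix
with first column 1_{C*} and remaining columns α_l·1_{V∖C*} is feasible for the
simplex-constrained problem, has objective k·cut(C*,V∖C*)/Ŝ(C*), and any
(row-consistent) argmax rounding yields at most two nonempty sets. -/
theorem degenerate_solution_symmetric {n k : ℕ} [NeZero k] (hk : 2 ≤ k)
    (W : Matrix (Fin n) (Fin n) ℝ)
    (hW : ∀ i j, 0 ≤ W i j) (hWsym : ∀ i j, W i j = W j i)
    (Sh : Finset (Fin n) → ℝ) (h0 : Sh ∅ = 0) (hnn : ∀ A, 0 ≤ Sh A)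
    (hsym : ∀ A : Finset (Fin n), Sh A = Sh Aᶜ)
    (hpos : ∀ C : Finset (Fin n), C.Nonempty → C ≠ Finset.univ → 0 < Sh C)
    (Cs : Finset (Fin n)) (hCne : Cs.Nonempty) (hCp : Cs ≠ Finset.univ)
    (hmin : ∀ C : Finset (Fin n), C.Nonempty → C ≠ Finset.univ →
      cutF W Cs Csᶜ / Sh Cs ≤ cutF W C Cᶜ / Sh C)
    (α : Fin k → ℝ) (hα : ∀ l, l ≠ 0 → 0 < α l)
    (hαsum : ∑ l ∈ Finset.univ.filter (fun l => l ≠ (0 : Fin k)), α l = 1)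
    (F : Fin n → Fin k → ℝ)
    (hF0 : ∀ i, F i 0 = indic Cs i)
    (hFl : ∀ i l, l ≠ 0 → F i l = α l * indic Csᶜ i) :
    (∀ i l, 0 ≤ F i l) ∧ (∀ i, ∑ l, F i l = 1) ∧
    (∑ l, tv W (fun i => F i l) / lovasz Sh (fun i => F i l)) =
      k * (cutF W Cs Csᶜ / Sh Cs) ∧
    (∀ g : Fin n → Fin k,
      (∀ i l, F i l ≤ F i (g i)) →
      (∀ i i', (∀ l, F i l = F i' l) → g i = g i') →
      ∃ l₁ l₂ : Fin k, ∀ i, g i = l₁ ∨ g i = l₂) :=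
  degenerate_solution_symmetric_general W hWsym Sh h0 hsym Cs α hα hαsum F hF0 hFl
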